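/- For a fixed dyadic box R' ⊆ [0,1]^d of measure 2^{k-m} (with 0 ≤ k ≤ m) and a fixed point x ∈ R', the number of dyadic boxes R of measure 2^{-m} with R ⊆ R' and x ∈ R equals C(k+d-1, d-1). -/

import Mathlib

/-!
A dyadic box containing `x` is determined by its levels `ℓ`: its `i`-th index must be
`⌊x i * 2 ^ ℓ i⌋₊`. Since dyadic intervals of the same level are disjoint and those of a finer
level refine those of a coarser one, such a box lies in `R'` exactly when `ℓ' ≤ ℓ` coordinatewise
(the bound `jj i < 2 ^ ℓ i` is then automatic, as `x ∈ R' ⊆ [0,1)^d`). The boxes to count thus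
correspond to the `ℓ ≥ ℓ'` with `∑ ℓ = m`, i.e. to the `ℓ - ℓ' : Fin d → ℕ` of sum `k`, and stars
and bars counts these.
-/

open Finset

def dyadicBox (d : ℕ) (ℓ jj : Fin d → ℕ) : Set (Fin d → ℝ) :=
  {x | ∀ i, (jj i : ℝ) / 2 ^ ℓ i ≤ x i ∧ x i < ((jj i : ℝ) + 1) / 2 ^ ℓ i}

def dyadicInterval (ℓ j : ℕ) : Set ℝ :=
  Set.Ico ((j : ℝ) / 2 ^ ℓ) ((j + 1) / 2 ^ ℓ)

lemma mem_dyadicInterval_iff {x : ℝ} {ℓ j : ℕ} :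
    x ∈ dyadicInterval ℓ j ↔ 0 ≤ x ∧ ⌊x * 2 ^ ℓ⌋₊ = j := by
  have h2 : (0 : ℝ) < 2 ^ ℓ := by positivity
  rw [dyadicInterval, Set.mem_Ico, div_le_iff₀ h2, lt_div_iff₀ h2]
  constructor
  · rintro ⟨hl, hr⟩
    have hx : 0 ≤ x * 2 ^ ℓ := (Nat.cast_nonneg j).trans hl
    exact ⟨nonneg_of_mul_nonneg_left hx h2, (Nat.floor_eq_iff hx).2 ⟨hl, hr⟩⟩
  · rintro ⟨hx, rfl⟩
    exact ⟨Nat.floor_le (by positivity), Nat.lt_floor_add_one _⟩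

lemma floor_mul_two_pow_eq_div {x : ℝ} {ℓ' ℓ : ℕ} (h : ℓ' ≤ ℓ) :
    ⌊x * 2 ^ ℓ'⌋₊ = ⌊x * 2 ^ ℓ⌋₊ / 2 ^ (ℓ - ℓ') := by
  obtain ⟨n, rfl⟩ := Nat.exists_eq_add_of_le h
  rw [Nat.add_sub_cancel_left, ← Nat.floor_div_natCast, Nat.cast_pow, Nat.cast_ofNat, pow_add,
    ← mul_assoc, mul_div_cancel_right₀ _ (by positivity)]

lemma floor_mul_two_pow_lt_two_pow_iff {x : ℝ} (ℓ : ℕ) : ⌊x * 2 ^ ℓ⌋₊ < 2 ^ ℓ ↔ x < 1 := by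
  have h := floor_mul_two_pow_eq_div (x := x) (Nat.zero_le ℓ)
  rw [pow_zero, mul_one, Nat.sub_zero] at h
  rw [← Nat.div_eq_zero_iff_lt (by positivity), ← h, Nat.floor_eq_zero]

lemma dyadicInterval_subset_of_mem {x : ℝ} {ℓ' ℓ j' j : ℕ} (h : ℓ' ≤ ℓ)
    (hx' : x ∈ dyadicInterval ℓ' j') (hx : x ∈ dyadicInterval ℓ j) :
    dyadicInterval ℓ j ⊆ dyadicInterval ℓ' j' := by
  intro y hy
  rw [mem_dyadicInterval_iff] at hx' hx hy ⊢
  rw [floor_mul_two_pow_eq_div h, hy.2, ← hx.2, ← floor_mul_two_pow_eq_div h, hx'.2]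
  exact ⟨hy.1, rfl⟩

lemma le_of_dyadicInterval_subset {ℓ' ℓ j' j : ℕ}
    (h : dyadicInterval ℓ j ⊆ dyadicInterval ℓ' j') : ℓ' ≤ ℓ := by
  have h2 : (0 : ℝ) < 2 ^ ℓ := by positivity
  obtain ⟨hl, hr⟩ := (Set.Ico_subset_Ico_iff (div_lt_div_of_pos_right (by linarith) h2)).1 h
  have hlen : (1 : ℝ) / 2 ^ ℓ ≤ 1 / 2 ^ ℓ' := by
    calc (1 : ℝ) / 2 ^ ℓ = (j + 1) / 2 ^ ℓ - j / 2 ^ ℓ := by ring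
      _ ≤ (j' + 1) / 2 ^ ℓ' - j' / 2 ^ ℓ' := by linarith
      _ = 1 / 2 ^ ℓ' := by ring
  rw [one_div_le_one_div h2 (by positivity)] at hlen
  exact (pow_le_pow_iff_right₀ one_lt_two).1 hlen

lemma dyadicInterval_nested_mem_iff {x : ℝ} {ℓ' ℓ j' j : ℕ} (hj' : j' < 2 ^ ℓ')
    (hx : x ∈ dyadicInterval ℓ' j') :
    (j < 2 ^ ℓ ∧ dyadicInterval ℓ j ⊆ dyadicInterval ℓ' j' ∧ x ∈ dyadicInterval ℓ j) ↔
      ℓ' ≤ ℓ ∧ j = ⌊x * 2 ^ ℓ⌋₊ := by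
  constructor
  · rintro ⟨-, hsub, hxj⟩
    exact ⟨le_of_dyadicInterval_subset hsub, (mem_dyadicInterval_iff.1 hxj).2.symm⟩
  · rintro ⟨hℓ, rfl⟩
    obtain ⟨hx0, hj'x⟩ := mem_dyadicInterval_iff.1 hx
    have hx1 : x < 1 := (floor_mul_two_pow_lt_two_pow_iff ℓ').1 (hj'x ▸ hj')
    have hxj : x ∈ dyadicInterval ℓ ⌊x * 2 ^ ℓ⌋₊ := mem_dyadicInterval_iff.2 ⟨hx0, rfl⟩
    exact ⟨(floor_mul_two_pow_lt_two_pow_iff ℓ).2 hx1, dyadicInterval_subset_of_mem hℓ hx hxj, hxj⟩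

lemma dyadicBox_eq_pi (d : ℕ) (ℓ jj : Fin d → ℕ) :
    dyadicBox d ℓ jj = Set.univ.pi fun i => dyadicInterval (ℓ i) (jj i) := by
  ext x
  simp [dyadicBox, dyadicInterval]

lemma dyadicBox_nested_mem_iff {d : ℕ} {ℓ' jj' ℓ jj : Fin d → ℕ} {x : Fin d → ℝ}
    (hjj' : ∀ i, jj' i < 2 ^ ℓ' i) (hx : x ∈ dyadicBox d ℓ' jj') :
    ((∀ i, jj i < 2 ^ ℓ i) ∧ dyadicBox d ℓ jj ⊆ dyadicBox d ℓ' jj' ∧ x ∈ dyadicBox d ℓ jj) ↔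
      ℓ' ≤ ℓ ∧ jj = fun i => ⌊x i * 2 ^ ℓ i⌋₊ := by
  rw [dyadicBox_eq_pi] at hx ⊢
  rw [dyadicBox_eq_pi]
  have key i := dyadicInterval_nested_mem_iff (j := jj i) (ℓ := ℓ i) (hjj' i) (hx i trivial)
  constructor
  · rintro ⟨hlt, hsub, hxb⟩
    have hsub_i := (Set.pi_subset_pi_iff.1 hsub).resolve_right (Set.nonempty_iff_ne_empty.1 ⟨x, hxb⟩)
    have h i := (key i).1 ⟨hlt i, hsub_i i trivial, hxb i trivial⟩
    exact ⟨fun i => (h i).1, funext fun i => (h i).2⟩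
  · rintro ⟨hle, hjj⟩
    have h i := (key i).2 ⟨hle i, congrFun hjj i⟩
    exact ⟨fun i => (h i).1, Set.pi_mono fun i _ => (h i).2.1, fun i _ => (h i).2.2⟩

lemma card_subtype_prod_graph {α β : Type*} (p : α → Prop) (g : α → β) :
    Nat.card {b : α × β // p b.1 ∧ b.2 = g b.1} = Nat.card {a // p a} :=
  Nat.card_congr
    { toFun := fun b => ⟨b.1.1, b.2.1⟩
      invFun := fun a => ⟨(a.1, g a.1), a.2, rfl⟩
      left_inv := fun b => Subtype.ext (Prod.ext rfl b.2.2.symm)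
      right_inv := fun _ => rfl }

lemma card_le_sum_eq_add {ι : Type*} [Fintype ι] (ℓ' : ι → ℕ) (n : ℕ) :
    Nat.card {ℓ : ι → ℕ // ℓ' ≤ ℓ ∧ ∑ i, ℓ i = n + ∑ i, ℓ' i} =
      Nat.card {f : ι → ℕ // ∑ i, f i = n} :=
  Nat.card_congr
    { toFun := fun ℓ => ⟨ℓ.1 - ℓ', by
        have h := congrArg (fun f : ι → ℕ => ∑ i, f i) (add_tsub_cancel_of_le ℓ.2.1)
        simp only [Pi.add_apply, Finset.sum_add_distrib, ℓ.2.2] at h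
        omega⟩
      invFun := fun f => ⟨ℓ' + f.1, le_self_add, by
        simp only [Pi.add_apply, Finset.sum_add_distrib, f.2, add_comm]⟩
      left_inv := fun ℓ => Subtype.ext (add_tsub_cancel_of_le ℓ.2.1)
      right_inv := fun f => Subtype.ext (add_tsub_cancel_left _ _) }

lemma card_sum_eq {ι : Type*} [Fintype ι] [Nonempty ι] (n : ℕ) :
    Nat.card {f : ι → ℕ // ∑ i, f i = n} =
      (n + Fintype.card ι - 1).choose (Fintype.card ι - 1) := by
  classical
  rw [← Nat.card_congr (Sym.equivNatSumOfFintype ι n), Nat.card_eq_fintype_card,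
    Sym.card_sym_eq_choose]
  obtain ⟨c, hc⟩ := Nat.exists_eq_add_of_lt (Fintype.card_pos (α := ι))
  rw [hc, zero_add, Nat.add_sub_cancel, show c + 1 + n - 1 = c + n by omega,
    show n + (c + 1) - 1 = c + n by omega, Nat.choose_symm_add]

/-- For a fixed dyadic box `R'` of measure `2^{k-m}` and a fixed `x ∈ R'`, the number of
dyadic boxes of measure `2^{-m}` contained in `R'` and containing `x` is `C(k+d-1, d-1)`. -/
theorem stmt13 (d m k : ℕ) (hd : 1 ≤ d) (hkm : k ≤ m)
    (ℓ' jj' : Fin d → ℕ) (hsum' : ∑ i, ℓ' i = m - k) (hjj' : ∀ i, jj' i < 2 ^ ℓ' i)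
    (x : Fin d → ℝ) (hx : x ∈ dyadicBox d ℓ' jj') :
    Nat.card {b : (Fin d → ℕ) × (Fin d → ℕ) //
        (∑ i, b.1 i) = m ∧ (∀ i, b.2 i < 2 ^ b.1 i) ∧
        dyadicBox d b.1 b.2 ⊆ dyadicBox d ℓ' jj' ∧ x ∈ dyadicBox d b.1 b.2}
      = (k + d - 1).choose (d - 1) := by
  have : Nonempty (Fin d) := ⟨⟨0, hd⟩⟩
  have hm : m = k + ∑ i, ℓ' i := by omega
  calc _ = Nat.card {b : (Fin d → ℕ) × (Fin d → ℕ) //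
          (ℓ' ≤ b.1 ∧ ∑ i, b.1 i = m) ∧ b.2 = fun i => ⌊x i * 2 ^ b.1 i⌋₊} :=
        Nat.card_congr <| Equiv.subtypeEquivRight fun b => by
          rw [dyadicBox_nested_mem_iff hjj' hx, and_assoc, and_left_comm]
    _ = Nat.card {f : Fin d → ℕ // ∑ i, f i = k} := by
        rw [card_subtype_prod_graph (fun ℓ => ℓ' ≤ ℓ ∧ ∑ i, ℓ i = m)
          fun ℓ i => ⌊x i * 2 ^ ℓ i⌋₊, hm, card_le_sum_eq_add]
    _ = (k + d - 1).choose (d - 1) := by rw [card_sum_eq, Fintype.card_fin]
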